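/- Let g : V → ℂ^{p−k} be a holomorphic map on a complex manifold V and let X ⊂ V be p-pseudoconcave. Then for every x ∈ ℂ^{p−k}, the fiber intersection g⁻¹(x) ∩ X is k-pseudoconcave in V. -/

import Mathlib

open MeasureTheory Metric Set Filter Bornology Topology

noncomputable section

/-- `ℂⁿ` with its Euclidean structure. -/
abbrev CSp (n : ℕ) := EuclideanSpace ℂ (Fin n)

instance (n : ℕ) : MeasureSpace (CSp n) :=
  { volume := (volume : Measure (∀ _ : Fin n, ℂ)).map (WithLp.toLp 2) }
instance (n : ℕ) : BorelSpace (CSp n) := PiLp.borelSpace 2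
/-- The union of the unbounded connected components of the complement of `K` in `ℂᵖ`. -/
def unbddCompl {p : ℕ} (K : Set (CSp p)) : Set (CSp p) :=
  ⋃₀ {C | C ⊆ Kᶜ ∧ IsConnected C ∧ ¬Bornology.IsBounded C}

/-- `U` is relatively open in `V`. -/
def RelOpen {n : ℕ} (V U : Set (CSp n)) : Prop := ∃ O, IsOpen O ∧ U = V ∩ O

/-- `f` is holomorphic along `V` on `W ⊆ V`: near each point of `W` it extends to a
holomorphic map of a full neighbourhood in `ℂⁿ` (for `V` open this is just holomorphy on `W`;
for `V` a submanifold this is the usual notion of holomorphy on `V`). -/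
def HolomorphicAlong {n q : ℕ} (V W : Set (CSp n)) (f : CSp n → CSp q) : Prop :=
  ∀ a ∈ W, ∃ O : Set (CSp n), IsOpen O ∧ a ∈ O ∧
    ∃ g : CSp n → CSp q, DifferentiableOn ℂ g O ∧ ∀ x ∈ O ∩ V, g x = f x

/-- `X` is a `p`-pseudoconcave subset of (the complex manifold) `V`: `X` is closed in `V` and
for every relatively open `U ⊂⊂ V` and every holomorphic map `f` from a neighbourhood of the
closure of `U` (in `V`) into `ℂᵖ`, `f(X ∩ U)` avoids the unbounded component of
`ℂᵖ \ f(X ∩ ∂U)`, where `∂U = closure U \ U` is the boundary of `U` in `V`. -/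
def IsPseudoconcave {n : ℕ} (p : ℕ) (V X : Set (CSp n)) : Prop :=
  X ⊆ V ∧ (V ∩ closure X ⊆ X) ∧
  ∀ U : Set (CSp n), RelOpen V U → IsCompact (closure U) → closure U ⊆ V →
    ∀ W : Set (CSp n), RelOpen V W → closure U ⊆ W →
      ∀ f : CSp n → CSp p, HolomorphicAlong V W f →
        f '' (X ∩ U) ⊆ (unbddCompl (f '' (X ∩ (closure U \ U))))ᶜ

/-!
Given a test map `f : V → ℂᵏ`, apply the `p`-pseudoconcavity of `X` to `F = e ∘ (f, g - x)`,
where `e : ℂᵏ × ℂ^{p-k} ≃ ℂᵖ` is any linear isomorphism. On the fiber `g = x` the map `F` is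
`f` followed by the embedding `ι = e ∘ (·, 0)`, and `F w ∈ ι(ℂᵏ)` forces `g w = x`. Hence `ι`
carries an unbounded component of `ℂᵏ \ f(Y ∩ ∂U)`, `Y = g⁻¹(x) ∩ X`, into an unbounded
connected subset of `ℂᵖ \ F(X ∩ ∂U)`.
-/

theorem inter_closure_preimage_inter_subset {α β : Type*} [TopologicalSpace α]
    [TopologicalSpace β] {V X : Set α} {T : Set β} {g : α → β} (hV : IsOpen V)
    (hg : ContinuousOn g V) (hT : IsClosed T) (hX : V ∩ closure X ⊆ X) :
    V ∩ closure (g ⁻¹' T ∩ X) ⊆ g ⁻¹' T ∩ X := by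
  rintro y ⟨hyV, hy⟩
  have hgy : g y ∈ closure (g '' (g ⁻¹' T ∩ X)) :=
    mem_closure_image (hg.continuousAt (hV.mem_nhds hyV)) hy
  refine ⟨?_, hX ⟨hyV, closure_mono inter_subset_right hy⟩⟩
  exact hT.closure_subset_iff.2 ((image_mono inter_subset_left).trans (image_preimage_subset g T))
    hgy

theorem mem_unbddCompl_of_leftInverse {k p : ℕ} {ι : CSp k →L[ℂ] CSp p}
    {π : CSp p →L[ℂ] CSp k} (hπι : Function.LeftInverse π ι) {K : Set (CSp k)}
    {K' : Set (CSp p)} (hK : ι ⁻¹' K' ⊆ K) {c : CSp k} (hc : c ∈ unbddCompl K) :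
    ι c ∈ unbddCompl K' := by
  obtain ⟨C, ⟨hCK, hC, hCunbdd⟩, hcC⟩ := hc
  refine ⟨ι '' C, ⟨?_, hC.image ι ι.continuous.continuousOn, fun hbdd => hCunbdd ?_⟩,
    mem_image_of_mem ι hcC⟩
  · rintro _ ⟨c', hc', rfl⟩ hc'K
    exact hCK hc' (hK hc'K)
  · rw [← hπι.image_image C]
    exact π.lipschitz.isBounded_image hbdd

section
variable {n q r s : ℕ} {V W : Set (CSp n)}

theorem DifferentiableOn.holomorphicAlong {g : CSp n → CSp q} (hV : IsOpen V)
    (hg : DifferentiableOn ℂ g V) (hWV : W ⊆ V) : HolomorphicAlong V W g :=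
  fun _ ha => ⟨V, hV, hWV ha, g, hg, fun _ _ => rfl⟩

theorem HolomorphicAlong.clm_comp_prodMk {f : CSp n → CSp q} {g : CSp n → CSp r}
    (hf : HolomorphicAlong V W f) (hg : HolomorphicAlong V W g)
    (L : (CSp q × CSp r) →L[ℂ] CSp s) :
    HolomorphicAlong V W (fun z => L (f z, g z)) := by
  intro a ha
  obtain ⟨O₁, hO₁, haO₁, f₀, hf₀, hf₀f⟩ := hf a ha
  obtain ⟨O₂, hO₂, haO₂, g₀, hg₀, hg₀g⟩ := hg a ha
  refine ⟨O₁ ∩ O₂, hO₁.inter hO₂, ⟨haO₁, haO₂⟩, fun z => L (f₀ z, g₀ z), ?_, ?_⟩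
  · exact L.differentiable.comp_differentiableOn
      ((hf₀.mono inter_subset_left).prodMk (hg₀.mono inter_subset_right))
  · rintro z ⟨⟨hz₁, hz₂⟩, hzV⟩
    simp only [hf₀f z ⟨hz₁, hzV⟩, hg₀g z ⟨hz₂, hzV⟩]

end

theorem image_fiber_subset_compl_unbddCompl {n k m p : ℕ} (e : (CSp k × CSp m) ≃L[ℂ] CSp p)
    {f : CSp n → CSp k} {g : CSp n → CSp m} {x : CSp m} {A B : Set (CSp n)}
    (h : (fun z => e (f z, g z - x)) '' A ⊆
      (unbddCompl ((fun z => e (f z, g z - x)) '' B))ᶜ) :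
    f '' (g ⁻¹' {x} ∩ A) ⊆ (unbddCompl (f '' (g ⁻¹' {x} ∩ B)))ᶜ := by
  set ι : CSp k →L[ℂ] CSp p := (e : (CSp k × CSp m) →L[ℂ] CSp p) ∘L .inl ℂ _ _
  set π : CSp p →L[ℂ] CSp k := .fst ℂ _ _ ∘L (e.symm : CSp p →L[ℂ] (CSp k × CSp m))
  have hπι : Function.LeftInverse π ι := fun c => by simp [ι, π]
  suffices hK : ι ⁻¹' ((fun z => e (f z, g z - x)) '' B) ⊆ f '' (g ⁻¹' {x} ∩ B) by
    rintro _ ⟨y, ⟨hgy, hyA⟩, rfl⟩ hfy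
    have hFy : e (f y, g y - x) = ι (f y) := by simp [ι, show g y = x from hgy]
    exact h ⟨y, hyA, rfl⟩ (by simpa only [hFy] using mem_unbddCompl_of_leftInverse hπι hK hfy)
  rintro c ⟨w, hwB, hw⟩
  have hw' : e (f w, g w - x) = e (c, 0) := by simpa [ι] using hw
  obtain ⟨hfw, hgw⟩ := Prod.ext_iff.1 (e.injective hw')
  exact ⟨w, ⟨sub_eq_zero.1 hgw, hwB⟩, hfw⟩

theorem pseudoconcave_fiber_general {n : ℕ} (p k : ℕ) (hkp : k ≤ p)
    (V X : Set (CSp n)) (hV : IsOpen V) (g : CSp n → CSp (p - k))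
    (hg : DifferentiableOn ℂ g V) (hX : IsPseudoconcave p V X) :
    ∀ x : CSp (p - k), IsPseudoconcave k V (g ⁻¹' {x} ∩ X) := by
  intro x
  obtain ⟨hXV, hXclosed, hXconcave⟩ := hX
  let e : (CSp k × CSp (p - k)) ≃L[ℂ] CSp p := .ofFinrankEq (by simp [hkp])
  refine ⟨inter_subset_right.trans hXV,
    inter_closure_preimage_inter_subset hV hg.continuousOn isClosed_singleton hXclosed, ?_⟩
  rintro U hU hUc hUV W ⟨O, hO, rfl⟩ hUW f hf
  have hF : HolomorphicAlong V (V ∩ O) (fun z => e (f z, g z - x)) :=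
    hf.clm_comp_prodMk ((hg.sub_const x).holomorphicAlong hV inter_subset_left)
      e.toContinuousLinearMap
  simpa only [inter_assoc] using
    image_fiber_subset_compl_unbddCompl e (hXconcave U hU hUc hUV _ ⟨O, hO, rfl⟩ hUW _ hF)

/-- If `g : V → ℂ^{p−k}` is holomorphic on the complex manifold `V` (here an open
subset of `ℂⁿ`) and `X ⊆ V` is `p`-pseudoconcave, then for every `x ∈ ℂ^{p−k}` the fiber
intersection `g⁻¹(x) ∩ X` is `k`-pseudoconcave in `V` (`1 ≤ k ≤ p`). -/
theorem pseudoconcave_fiber {n : ℕ} (p k : ℕ) (hk : 1 ≤ k) (hkp : k ≤ p)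
    (V X : Set (CSp n)) (hV : IsOpen V) (g : CSp n → CSp (p - k))
    (hg : DifferentiableOn ℂ g V) (hX : IsPseudoconcave p V X) :
    ∀ x : CSp (p - k), IsPseudoconcave k V (g ⁻¹' {x} ∩ X) :=
  pseudoconcave_fiber_general p k hkp V X hV g hg hX
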